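/- Let d, e be real numbers with 1/2 ≤ d ≤ 1, 1/2 ≤ e ≤ 1, and let ρ > 0. With P₁ and P₂ as defined above, 32(d²+e²)²(P₁(d,e) + ρ·P₂(d,e)) > 0. -/
import Mathlib

set_option maxHeartbeats 800000 in
theorem stmt_2 (d e ρ : ℝ) (hd1 : 1/2 ≤ d) (hd2 : d ≤ 1) (he1 : 1/2 ≤ e) (he2 : e ≤ 1)
    (hρ : 0 < ρ) :
    0 < 32*(d^2+e^2)^2 *
      ((-d^3*(1-2*e)^2*e - 2*d^2*(-2+e)*e^3 - e^4 + d*e^3*(-1+4*e) + d^4*(-1+4*e-2*e^2))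
        + ρ * (2*d^4*(-1+e)^2 + d^3*(1-2*e)^2*e + 2*d^2*(-1+e)^2*e^2 + 2*e^4
          + d*(e^3 - 4*e^4))) := by
  have h2 : 0 ≤ (2*d^4*(-1+e)^2 + d^3*(1-2*e)^2*e + 2*d^2*(-1+e)^2*e^2 + 2*e^4
      + d*(e^3 - 4*e^4)) := by
    nlinarith [mul_nonneg (sub_nonneg.2 hd1) (sub_nonneg.2 he1),
      mul_nonneg (sub_nonneg.2 hd2) (sub_nonneg.2 he2),
      mul_nonneg (sub_nonneg.2 hd1) (sub_nonneg.2 he2),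
      mul_nonneg (sub_nonneg.2 hd2) (sub_nonneg.2 he1),
      sq_nonneg (d - 1/2), sq_nonneg (e - 1/2), sq_nonneg (1 - d), sq_nonneg (1 - e),
      sq_nonneg (d - e),
      mul_nonneg (mul_nonneg (sub_nonneg.2 hd1) (sub_nonneg.2 he1))
        (mul_nonneg (sub_nonneg.2 hd2) (sub_nonneg.2 he2)),
      mul_nonneg (mul_nonneg (sub_nonneg.2 hd1) (sub_nonneg.2 he2))
        (mul_nonneg (sub_nonneg.2 hd2) (sub_nonneg.2 he1)),
      sq_nonneg ((d-1/2)*(1-e)), sq_nonneg ((e-1/2)*(1-d)), sq_nonneg ((d-1/2)*(e-1/2)),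
      sq_nonneg ((1-d)*(1-e))]
  have h1 : 0 < (-d^3*(1-2*e)^2*e - 2*d^2*(-2+e)*e^3 - e^4 + d*e^3*(-1+4*e)
      + d^4*(-1+4*e-2*e^2)) := by
    clear h2
    obtain ⟨a, rfl⟩ : ∃ a, d = a + 1/2 := ⟨d - 1/2, by ring⟩
    obtain ⟨b, rfl⟩ : ∃ b, e = b + 1/2 := ⟨e - 1/2, by ring⟩
    have ha : 0 ≤ a := by linarith
    have hb : 0 ≤ b := by linarith
    have ha2 : a ≤ 1/2 := by linarith
    have hb2 : b ≤ 1/2 := by linarith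
    have hab : 0 ≤ a*b := mul_nonneg ha hb
    have t1 : 0 ≤ a*b*(1/4 - a*b) := mul_nonneg hab (by nlinarith)
    have t2 : 0 ≤ a*b*(1/8 - a*b^2) := mul_nonneg hab (by nlinarith [mul_nonneg hb hb, sq_nonneg b])
    have t3 : 0 ≤ a*b*(1/16 - a*b^3) := mul_nonneg hab
      (by nlinarith [mul_nonneg hb hb, mul_nonneg (mul_nonneg hb hb) hb])
    have t4 : 0 ≤ a*b*(1/8 - a^2*b) := mul_nonneg hab (by nlinarith [mul_nonneg ha ha])
    have t5 : 0 ≤ a*b*(1/16 - a^2*b^2) := mul_nonneg hab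
      (by nlinarith [mul_nonneg ha ha, mul_nonneg hb hb, mul_nonneg (mul_nonneg ha ha) hb])
    have t6 : 0 ≤ a*b*(1/16 - a^3*b) := mul_nonneg hab
      (by nlinarith [mul_nonneg ha ha, mul_nonneg (mul_nonneg ha ha) ha])
    linarith [t1, t2, t3, t4, t5, t6, hab, ha, hb,
      mul_nonneg hab hb, mul_nonneg (mul_nonneg hab hb) hb,
      mul_nonneg (mul_nonneg (mul_nonneg hab hb) hb) hb,
      mul_nonneg hab ha, mul_nonneg (mul_nonneg hab ha) ha,
      mul_nonneg (mul_nonneg (mul_nonneg hab ha) ha) ha,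
      mul_nonneg ha ha, mul_nonneg hb hb, mul_nonneg (mul_nonneg ha ha) ha,
      mul_nonneg (mul_nonneg hb hb) hb,
      mul_nonneg (mul_nonneg (mul_nonneg ha ha) ha) ha,
      mul_nonneg (mul_nonneg (mul_nonneg hb hb) hb) hb]
  have hsq : (0:ℝ) < 32*(d^2+e^2)^2 := by positivity
  have := mul_nonneg hρ.le h2
  have hpos : 0 < (-d^3*(1-2*e)^2*e - 2*d^2*(-2+e)*e^3 - e^4 + d*e^3*(-1+4*e)
      + d^4*(-1+4*e-2*e^2)) + ρ * (2*d^4*(-1+e)^2 + d^3*(1-2*e)^2*e + 2*d^2*(-1+e)^2*e^2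
      + 2*e^4 + d*(e^3 - 4*e^4)) := by linarith
  exact mul_pos hsq hpos
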